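/- arXiv:1406.6984 — 5 statements merged into one kernel-verified Lean document; each statement's English description precedes it below -/
import Mathlib

section
/- Let L > 0 and let u : [0,L] → [0,π] be continuous. Define γ : [0,L] → ℝ² by γ(s) = (∫₀ˢ cos u(τ) dτ, ∫₀ˢ sin u(τ) dτ). Then γ is injective on [0,L]. -/
/-!
Since `sin ∘ u ≥ 0`, the second coordinate of `γ` is nondecreasing, and it can take the same value
at `s < t` only if `sin ∘ u` vanishes on `(s, t]`. There `cos ∘ u` takes only the values `±1`, so
by continuity it is constant, and then `γ t - γ s = (±(t - s), 0) ≠ 0`.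
-/

open Real Set intervalIntegral MeasureTheory

lemma eqOn_zero_of_intervalIntegral_eq_zero {f : ℝ → ℝ} {a b : ℝ} (hab : a ≤ b)
    (hf : ContinuousOn f (Icc a b)) (hf₀ : ∀ x ∈ Ioc a b, 0 ≤ f x)
    (h : ∫ x in a..b, f x = 0) : EqOn f 0 (Ioc a b) := by
  have hae : f =ᵐ[volume.restrict (Ioc a b)] 0 :=
    (integral_eq_zero_iff_of_le_of_nonneg_ae hab (ae_restrict_of_forall_mem measurableSet_Ioc hf₀)
      (hf.intervalIntegrable_of_Icc hab)).1 h
  exact Measure.eqOn_Ioc_of_ae_eq volume hae (hf.mono Ioc_subset_Icc_self) continuousOn_const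

lemma abs_intervalIntegral_cos_eq_of_intervalIntegral_sin_eq_zero {u : ℝ → ℝ} {s t : ℝ}
    (hst : s < t) (hu : ContinuousOn u (Icc s t)) (hrange : MapsTo u (Icc s t) (Icc 0 π))
    (hsin : ∫ τ in s..t, sin (u τ) = 0) : |∫ τ in s..t, cos (u τ)| = t - s := by
  have hsin_zero : EqOn (fun τ ↦ sin (u τ)) 0 (Ioc s t) :=
    eqOn_zero_of_intervalIntegral_eq_zero hst.le (continuous_sin.comp_continuousOn hu)
      (fun τ hτ ↦ sin_nonneg_of_mem_Icc (hrange (Ioc_subset_Icc_self hτ))) hsin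
  have hcos_const : ∀ τ ∈ Ioc s t, cos (u τ) = cos (u t) := fun τ hτ ↦
    isPreconnected_Ioc.constant_of_mapsTo (T := ({1, -1} : Set ℝ))
      (isDiscrete_iff_discreteTopology.2 inferInstance)
      (continuous_cos.comp_continuousOn (hu.mono Ioc_subset_Icc_self))
      (fun σ hσ ↦ sin_eq_zero_iff_cos_eq.1 (hsin_zero hσ)) hτ ⟨hst, le_rfl⟩
  have hcos_abs : |cos (u t)| = 1 := by
    rcases sin_eq_zero_iff_cos_eq.1 (hsin_zero ⟨hst, le_rfl⟩) with h | h <;> simp [h]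
  calc |∫ τ in s..t, cos (u τ)| = |∫ _ in s..t, cos (u t)| := by
        rw [integral_congr_ae (ae_of_all _ fun τ hτ ↦ hcos_const τ (uIoc_of_le hst.le ▸ hτ))]
    _ = t - s := by simp [abs_mul, hcos_abs, hst.le]

theorem stmt_0_general (L : ℝ) (u : ℝ → ℝ)
    (hu : ContinuousOn u (Set.Icc 0 L))
    (hrange : ∀ s ∈ Set.Icc 0 L, u s ∈ Set.Icc (0:ℝ) Real.pi) :
    Set.InjOn (fun s : ℝ =>
      ((∫ τ in (0:ℝ)..s, Real.cos (u τ)), (∫ τ in (0:ℝ)..s, Real.sin (u τ))))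
      (Set.Icc 0 L) := by
  intro s hs t ht hγ
  by_contra hne
  wlog hlt : s < t generalizing s t
  · exact this ht hs hγ.symm (Ne.symm hne) (lt_of_le_of_ne (not_lt.1 hlt) (Ne.symm hne))
  have hsub : Icc s t ⊆ Icc 0 L := Icc_subset_Icc hs.1 ht.2
  have hchord : ∀ f : ℝ → ℝ, ContinuousOn f (Icc 0 L) →
      ∫ τ in (0:ℝ)..s, f τ = ∫ τ in (0:ℝ)..t, f τ → ∫ τ in s..t, f τ = 0 := fun f hf h ↦ by
    rw [← integral_interval_sub_left (hf.mono (uIcc_subset_Icc ⟨le_rfl, hs.1.trans hs.2⟩ ht)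
      |>.intervalIntegrable) (hf.mono (uIcc_subset_Icc ⟨le_rfl, hs.1.trans hs.2⟩ hs)
      |>.intervalIntegrable), h, sub_self]
  have hsin := hchord (fun τ ↦ sin (u τ)) (continuous_sin.comp_continuousOn hu)
    (Prod.ext_iff.1 hγ).2
  have hcos := hchord (fun τ ↦ cos (u τ)) (continuous_cos.comp_continuousOn hu)
    (Prod.ext_iff.1 hγ).1
  have hlen := abs_intervalIntegral_cos_eq_of_intervalIntegral_sin_eq_zero hlt (hu.mono hsub)
    (fun τ hτ ↦ hrange τ (hsub hτ)) hsin
  rw [hcos, abs_zero] at hlen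
  linarith

theorem stmt_0 (L : ℝ) (hL : 0 < L) (u : ℝ → ℝ)
    (hu : ContinuousOn u (Set.Icc 0 L))
    (hrange : ∀ s ∈ Set.Icc 0 L, u s ∈ Set.Icc (0:ℝ) Real.pi) :
    Set.InjOn (fun s : ℝ =>
      ((∫ τ in (0:ℝ)..s, Real.cos (u τ)), (∫ τ in (0:ℝ)..s, Real.sin (u τ))))
      (Set.Icc 0 L) :=
  stmt_0_general L u hu hrange
end

section
/- Let L > 0 and let u : [0,L] → [0,π] be continuous. Then for all distinct s, t ∈ (0,L): (∫ₛᵗ cos u(τ) dτ)² + (∫ₛᵗ sin u(τ) dτ)² > 0. -/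
/-! If `sin ∘ u` is not identically zero on `[s, t]`, its integral is positive. Otherwise `u`
only takes values with `cos u = ±1`, and by continuity `cos ∘ u` is a constant `±1`, so its
integral is `±(t - s) ≠ 0`. -/

open Real Set intervalIntegral

theorem sq_integral_eq_of_sq_eq_one {g : ℝ → ℝ} {a b : ℝ} (hab : a ≤ b)
    (hg : ContinuousOn g (Icc a b)) (hsq : ∀ x ∈ Icc a b, g x ^ 2 = 1) :
    (∫ x in a..b, g x) ^ 2 = (b - a) ^ 2 := by
  have ha : a ∈ Icc a b := left_mem_Icc.mpr hab
  have hpm : MapsTo g (Icc a b) ({1, -1} : Set ℝ) := fun x hx => sq_eq_one_iff.mp (hsq x hx)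
  have hconst : EqOn g (fun _ => g a) (uIcc a b) := by
    rw [uIcc_of_le hab]
    exact fun x hx => isPreconnected_Icc.constant_of_mapsTo (toFinite _).isDiscrete hg hpm hx ha
  rw [integral_congr hconst, integral_const, smul_eq_mul, mul_pow, hsq a ha, mul_one]

theorem sq_integral_cos_add_sq_integral_sin_pos {u : ℝ → ℝ} {a b : ℝ} (hab : a ≠ b)
    (hu : ContinuousOn u (uIcc a b)) (hsin : ∀ x ∈ uIcc a b, 0 ≤ sin (u x)) :
    0 < (∫ x in a..b, cos (u x)) ^ 2 + (∫ x in a..b, sin (u x)) ^ 2 := by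
  wlog hlt : a < b generalizing a b
  · have := this hab.symm (uIcc_comm a b ▸ hu) (uIcc_comm a b ▸ hsin)
      (hab.lt_or_gt.resolve_left hlt)
    simpa only [integral_symm a b, neg_sq] using this
  rw [uIcc_of_le hlt.le] at hu hsin
  by_cases hpos : ∃ c ∈ Icc a b, 0 < sin (u c)
  · have := integral_pos hlt (continuous_sin.comp_continuousOn hu)
      (fun x hx => hsin x (Ioc_subset_Icc_self hx)) hpos
    positivity
  · push Not at hpos
    have hcos_sq : ∀ x ∈ Icc a b, cos (u x) ^ 2 = 1 := fun x hx => by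
      nlinarith [sin_sq_add_cos_sq (u x), hsin x hx, hpos x hx]
    rw [sq_integral_eq_of_sq_eq_one (g := fun x => cos (u x)) hlt.le
      (continuous_cos.comp_continuousOn hu) hcos_sq]
    nlinarith [sq_nonneg (∫ x in a..b, sin (u x)), sub_pos.mpr hlt]

theorem stmt_1_general (L : ℝ) (u : ℝ → ℝ)
    (hu : ContinuousOn u (Set.Icc 0 L))
    (hrange : ∀ s ∈ Set.Icc 0 L, u s ∈ Set.Icc (0:ℝ) Real.pi) :
    ∀ s ∈ Set.Ioo (0:ℝ) L, ∀ t ∈ Set.Ioo (0:ℝ) L, s ≠ t →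
      0 < (∫ τ in s..t, Real.cos (u τ)) ^ 2 + (∫ τ in s..t, Real.sin (u τ)) ^ 2 := by
  intro s hs t ht hst
  have hsub : uIcc s t ⊆ Icc 0 L :=
    uIcc_subset_Icc (Ioo_subset_Icc_self hs) (Ioo_subset_Icc_self ht)
  refine sq_integral_cos_add_sq_integral_sin_pos hst (hu.mono hsub) fun x hx => ?_
  exact sin_nonneg_of_nonneg_of_le_pi (hrange x (hsub hx)).1 (hrange x (hsub hx)).2

theorem stmt_1 (L : ℝ) (hL : 0 < L) (u : ℝ → ℝ)
    (hu : ContinuousOn u (Set.Icc 0 L))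
    (hrange : ∀ s ∈ Set.Icc 0 L, u s ∈ Set.Icc (0:ℝ) Real.pi) :
    ∀ s ∈ Set.Ioo (0:ℝ) L, ∀ t ∈ Set.Ioo (0:ℝ) L, s ≠ t →
      0 < (∫ τ in s..t, Real.cos (u τ)) ^ 2 + (∫ τ in s..t, Real.sin (u τ)) ^ 2 :=
  stmt_1_general L u hu hrange
end

section
/- Let v : [0,L] → [0,∞) be Lipschitz continuous, v* its non-decreasing rearrangement. If ∫₀ᴸ ∫ₛᴸ v(c) dc ds = ∫₀ᴸ ∫ₛᴸ v*(c) dc ds, then ∫ₛᴸ v(c) dc = ∫ₛᴸ v*(c) dc for all s ∈ [0,L], and hence v = v* almost everywhere — in particular v is a.e. equal to a non-decreasing function. -/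
open Real Set intervalIntegral MeasureTheory

/-- The non-decreasing rearrangement of a function `u` on the interval `[0, L]`. -/
noncomputable def ndRearr (L : ℝ) (u : ℝ → ℝ) (s : ℝ) : ℝ :=
  sInf {c : ℝ | 0 ≤ c ∧
    (MeasureTheory.volume {t : ℝ | t ∈ Set.Icc 0 L ∧ c ≤ u t}).toReal ≤ L - s}

/-!
Write `u*` for the rearrangement. If `u* t < c`, then `u ≥ c` on a set of measure at most
`L - t`, so `u* ≥ c` on the final interval of length `|{u ≥ c}|`. Hence each superlevel set
of `u*` meets `[s, L]` in at least as much measure as the corresponding one of `u`, and the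
layer-cake formula gives the Hardy–Littlewood inequality `∫ₛᴸ u ≤ ∫ₛᴸ u*` for every `s`.
Both tails are continuous in `s`, so equality of their integrals over `[0, L]` forces
equality for every `s`; differentiating in `s` (Lebesgue) gives `u = u*` a.e.
-/

section Rearrangement

variable {L : ℝ} {u : ℝ → ℝ}

lemma ndRearr_nonneg (L : ℝ) (u : ℝ → ℝ) (s : ℝ) : 0 ≤ ndRearr L u s :=
  Real.sInf_nonneg fun _ hc => hc.1

lemma ndRearr_set_nonempty (hu : BddAbove (u '' Icc 0 L)) {s : ℝ} (hs : s ≤ L) :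
    {c : ℝ | 0 ≤ c ∧
      (volume {t : ℝ | t ∈ Icc 0 L ∧ c ≤ u t}).toReal ≤ L - s}.Nonempty := by
  obtain ⟨C, hC⟩ := hu
  have hempty : {t : ℝ | t ∈ Icc 0 L ∧ max C 0 + 1 ≤ u t} = ∅ :=
    eq_empty_of_forall_notMem fun t ⟨ht, hle⟩ => by
      linarith [hC (mem_image_of_mem u ht), le_max_left C 0]
  refine ⟨max C 0 + 1, by positivity, ?_⟩
  rw [hempty, measure_empty, ENNReal.toReal_zero]
  linarith

lemma ndRearr_monotoneOn (hu : BddAbove (u '' Icc 0 L)) : MonotoneOn (ndRearr L u) (Iic L) :=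
  fun _ _ _ ht hst => csInf_le_csInf ⟨0, fun _ hc => hc.1⟩ (ndRearr_set_nonempty hu ht)
    fun _ hc => ⟨hc.1, hc.2.trans (by linarith)⟩

lemma ndRearr_integrableOn (hu : BddAbove (u '' Icc 0 L)) (a : ℝ) :
    IntegrableOn (ndRearr L u) (Icc a L) :=
  ((ndRearr_monotoneOn hu).mono Icc_subset_Iic_self).integrableOn_isCompact isCompact_Icc

lemma volume_superlevel_ne_top (L : ℝ) (u : ℝ → ℝ) (c : ℝ) :
    volume {t : ℝ | t ∈ Icc 0 L ∧ c ≤ u t} ≠ ⊤ :=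
  ne_top_of_le_ne_top measure_Icc_lt_top.ne (measure_mono fun _ ht => ht.1)

lemma volume_superlevel_le_of_ndRearr_lt (hu : BddAbove (u '' Icc 0 L)) {t c : ℝ} (ht : t ≤ L)
    (h : ndRearr L u t < c) :
    (volume {x : ℝ | x ∈ Icc 0 L ∧ c ≤ u x}).toReal ≤ L - t := by
  obtain ⟨c', ⟨-, hc'⟩, hc'c⟩ := exists_lt_of_csInf_lt (ndRearr_set_nonempty hu ht) h
  refine le_trans (ENNReal.toReal_mono (volume_superlevel_ne_top L u c') ?_) hc'
  exact measure_mono fun x hx => ⟨hx.1, hc'c.le.trans hx.2⟩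

lemma volume_superlevel_inter_le_ndRearr (hu : BddAbove (u '' Icc 0 L)) {s : ℝ}
    (hs : s ∈ Icc 0 L) (c : ℝ) :
    volume ({x | c ≤ u x} ∩ Icc s L) ≤ volume ({x | c ≤ ndRearr L u x} ∩ Icc s L) := by
  set ν := volume {x : ℝ | x ∈ Icc 0 L ∧ c ≤ u x}
  have hν : ν ≠ ⊤ := volume_superlevel_ne_top L u c
  have hfinal : Ioc (max s (L - ν.toReal)) L ⊆ {x | c ≤ ndRearr L u x} ∩ Icc s L := by
    rintro t ⟨hlt, htL⟩
    refine ⟨(not_lt.1 fun hrt => ?_ : c ≤ ndRearr L u t), (le_max_left _ _).trans hlt.le, htL⟩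
    linarith [volume_superlevel_le_of_ndRearr_lt hu htL hrt, le_max_right s (L - ν.toReal)]
  calc volume ({x | c ≤ u x} ∩ Icc s L)
      ≤ min (volume (Icc s L)) ν :=
        le_min (measure_mono inter_subset_right)
          (measure_mono fun x hx => ⟨⟨hs.1.trans hx.2.1, hx.2.2⟩, hx.1⟩)
    _ = volume (Ioc (max s (L - ν.toReal)) L) := by
        rw [Real.volume_Icc, Real.volume_Ioc, ← min_sub_sub_left, sub_sub_cancel,
          ENNReal.ofReal_min, ENNReal.ofReal_toReal hν]
    _ ≤ _ := measure_mono hfinal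

lemma setLIntegral_Icc_le_ndRearr (hmeas : AEMeasurable u (volume.restrict (Icc 0 L)))
    (h0 : ∀ t ∈ Icc 0 L, 0 ≤ u t) (hu : BddAbove (u '' Icc 0 L)) {s : ℝ}
    (hs : s ∈ Icc 0 L) :
    ∫⁻ t in Icc s L, ENNReal.ofReal (u t) ≤
      ∫⁻ t in Icc s L, ENNReal.ofReal (ndRearr L u t) := by
  have hsub : Icc s L ⊆ Icc 0 L := Icc_subset_Icc_left hs.1
  rw [lintegral_eq_lintegral_meas_le _
      (ae_restrict_of_forall_mem measurableSet_Icc fun t ht => h0 t (hsub ht))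
      (hmeas.mono_measure (Measure.restrict_mono hsub le_rfl)),
    lintegral_eq_lintegral_meas_le _ (ae_of_all _ (ndRearr_nonneg L u))
      (ndRearr_integrableOn hu s).aemeasurable]
  refine lintegral_mono fun c => ?_
  rw [Measure.restrict_apply' measurableSet_Icc, Measure.restrict_apply' measurableSet_Icc]
  exact volume_superlevel_inter_le_ndRearr hu hs c

lemma integral_le_integral_ndRearr (hint : IntegrableOn u (Icc 0 L))
    (h0 : ∀ t ∈ Icc 0 L, 0 ≤ u t) (hu : BddAbove (u '' Icc 0 L)) {s : ℝ} (hs : s ∈ Icc 0 L) :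
    ∫ t in s..L, u t ≤ ∫ t in s..L, ndRearr L u t := by
  have hsub : Icc s L ⊆ Icc 0 L := Icc_subset_Icc_left hs.1
  rw [integral_of_le hs.2, integral_of_le hs.2, ← integral_Icc_eq_integral_Ioc,
    ← integral_Icc_eq_integral_Ioc,
    ← ENNReal.ofReal_le_ofReal_iff
      (setIntegral_nonneg measurableSet_Icc fun t _ => ndRearr_nonneg L u t),
    ofReal_integral_eq_lintegral_ofReal (hint.mono_set hsub)
      (ae_restrict_of_forall_mem measurableSet_Icc fun t ht => h0 t (hsub ht)),
    ofReal_integral_eq_lintegral_ofReal (ndRearr_integrableOn hu s)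
      (ae_of_all _ (ndRearr_nonneg L u))]
  exact setLIntegral_Icc_le_ndRearr hint.aemeasurable h0 hu hs

end Rearrangement

section TailIntegrals

variable {f g : ℝ → ℝ} {a b : ℝ}

lemma continuousOn_integral_tail (hab : a ≤ b) (hf : IntegrableOn f (Icc a b)) :
    ContinuousOn (fun s => ∫ t in s..b, f t) (Icc a b) := by
  rw [← uIcc_of_le hab] at hf ⊢
  exact continuousOn_primitive_interval_left hf

lemma eqOn_Icc_of_le_of_integral_eq (hab : a < b) (hf : ContinuousOn f (Icc a b))
    (hg : ContinuousOn g (Icc a b)) (hle : ∀ x ∈ Icc a b, f x ≤ g x)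
    (h : ∫ x in a..b, f x = ∫ x in a..b, g x) : EqOn f g (Icc a b) := fun x hx => by
  by_contra hne
  exact (integral_lt_integral_of_continuousOn_of_le_of_exists_lt hab hf hg
    (fun y hy => hle y (Ioc_subset_Icc_self hy)) ⟨x, hx, (hle x hx).lt_of_ne hne⟩).ne h

lemma ae_eq_of_forall_integral_tail_eq (hab : a ≤ b) (hf : IntegrableOn f (Icc a b))
    (hg : IntegrableOn g (Icc a b))
    (h : ∀ s ∈ Icc a b, ∫ t in s..b, f t = ∫ t in s..b, g t) :
    ∀ᵐ x ∂volume.restrict (Icc a b), f x = g x := by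
  have hfi := (intervalIntegrable_iff_integrableOn_Icc_of_le hab).2 hf
  have hgi := (intervalIntegrable_iff_integrableOn_Icc_of_le hab).2 hg
  have hfg : IntervalIntegrable (f - g) volume a b := hfi.sub hgi
  have htail : ∀ s ∈ Icc a b, ∫ t in s..b, (f - g) t = 0 := fun s hs => by
    have hsub : uIcc s b ⊆ uIcc a b := uIcc_subset_uIcc (uIcc_of_le hab ▸ hs) right_mem_uIcc
    rw [Pi.sub_def, integral_sub (hfi.mono_set hsub) (hgi.mono_set hsub), h s hs, sub_self]
  have hprim : ∀ x ∈ Icc a b, ∫ t in a..x, (f - g) t = 0 := fun x hx => by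
    have hx' : x ∈ uIcc a b := uIcc_of_le hab ▸ hx
    have := integral_add_adjacent_intervals (hfg.mono_set (uIcc_subset_uIcc left_mem_uIcc hx'))
      (hfg.mono_set (uIcc_subset_uIcc hx' right_mem_uIcc))
    linarith [htail a (left_mem_Icc.2 hab), htail x hx]
  rw [Measure.restrict_congr_set Ioo_ae_eq_Icc.symm]
  filter_upwards [ae_restrict_of_ae hfg.ae_hasDerivAt_integral, ae_restrict_mem measurableSet_Ioo]
    with x hderiv hx
  have hlocal : (fun y => ∫ t in a..y, (f - g) t) =ᶠ[nhds x] fun _ => 0 :=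
    Filter.eventually_of_mem (Ioo_mem_nhds hx.1 hx.2) fun y hy =>
      hprim y (Ioo_subset_Icc_self hy)
  have hx' : x ∈ uIcc a b := uIcc_of_le hab ▸ Ioo_subset_Icc_self hx
  exact sub_eq_zero.1 <| (hderiv hx' a left_mem_uIcc).unique
    ((hasDerivAt_const x 0).congr_of_eventuallyEq hlocal)

end TailIntegrals

theorem stmt_8 (L : ℝ) (hL : 0 < L) (v : ℝ → ℝ) (K : NNReal)
    (hv : LipschitzOnWith K v (Set.Icc 0 L))
    (hv0 : ∀ s ∈ Set.Icc 0 L, 0 ≤ v s)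
    (heq : ∫ s in (0:ℝ)..L, (∫ c in s..L, v c)
         = ∫ s in (0:ℝ)..L, (∫ c in s..L, ndRearr L v c)) :
    (∀ s ∈ Set.Icc 0 L, (∫ c in s..L, v c) = ∫ c in s..L, ndRearr L v c) ∧
    (∀ᵐ s ∂(MeasureTheory.volume.restrict (Set.Icc 0 L)), v s = ndRearr L v s) ∧
    (∃ w : ℝ → ℝ, MonotoneOn w (Set.Icc 0 L) ∧
      ∀ᵐ s ∂(MeasureTheory.volume.restrict (Set.Icc 0 L)), v s = w s) := by
  have hcont : ContinuousOn v (Icc 0 L) := hv.continuousOn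
  have hbdd : BddAbove (v '' Icc 0 L) := isCompact_Icc.bddAbove_image hcont
  have hint : IntegrableOn v (Icc 0 L) := hcont.integrableOn_Icc
  have hint' : IntegrableOn (ndRearr L v) (Icc 0 L) := ndRearr_integrableOn hbdd 0
  have htails : EqOn (fun s => ∫ c in s..L, v c) (fun s => ∫ c in s..L, ndRearr L v c)
      (Icc 0 L) :=
    eqOn_Icc_of_le_of_integral_eq hL (continuousOn_integral_tail hL.le hint)
      (continuousOn_integral_tail hL.le hint')
      (fun s hs => integral_le_integral_ndRearr hint hv0 hbdd hs) heq
  have hae := ae_eq_of_forall_integral_tail_eq hL.le hint hint' htails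
  exact ⟨htails, hae, ndRearr L v, (ndRearr_monotoneOn hbdd).mono Icc_subset_Iic_self, hae⟩
end

section
/- Let L > 0 and θ : [0,L] → [0,π] be Lipschitz, with non-decreasing rearrangement θ*. Then ∫₀ᴸ s·(1 − cos θ(s)) ds ≤ ∫₀ᴸ s·(1 − cos θ*(s)) ds; equivalently, −∫₀ᴸ s cos θ(s) ds ≤ −∫₀ᴸ s cos θ*(s) ds. -/
open Real Set intervalIntegral MeasureTheory ENNReal Filter

section Aux

variable {L : ℝ} {f : ℝ → ℝ}

/-- distribution -/
noncomputable def Dm (L : ℝ) (f : ℝ → ℝ) (c : ℝ) : ℝ≥0∞ :=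
  MeasureTheory.volume {t : ℝ | t ∈ Set.Icc 0 L ∧ c ≤ f t}

lemma Dm_le (c : ℝ) : Dm L f c ≤ ENNReal.ofReal L := by
  have : {t : ℝ | t ∈ Set.Icc 0 L ∧ c ≤ f t} ⊆ Icc 0 L := fun t ht => ht.1
  calc Dm L f c ≤ volume (Icc (0:ℝ) L) := measure_mono this
    _ = ENNReal.ofReal (L - 0) := Real.volume_Icc
    _ = ENNReal.ofReal L := by norm_num

lemma Dm_ne_top (c : ℝ) : Dm L f c ≠ ⊤ :=
  ne_top_of_le_ne_top ofReal_ne_top (Dm_le c)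

lemma Dm_anti : Antitone (Dm L f) := fun c c' h =>
  measure_mono (fun t ht => ⟨ht.1, le_trans h ht.2⟩)

lemma Dm_toReal_le (hL : 0 ≤ L) (c : ℝ) : (Dm L f c).toReal ≤ L := by
  have h1 := ENNReal.toReal_mono (a := Dm L f c) ofReal_ne_top (Dm_le (f := f) c)
  rwa [ENNReal.toReal_ofReal hL] at h1

lemma Dm_toReal_anti {c c' : ℝ} (h : c ≤ c') : (Dm L f c').toReal ≤ (Dm L f c).toReal :=
  ENNReal.toReal_mono (Dm_ne_top c) (Dm_anti h)

/-- the defining set -/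
lemma ndRearr_eq (s : ℝ) : ndRearr L f s = sInf {c : ℝ | 0 ≤ c ∧ (Dm L f c).toReal ≤ L - s} := rfl

lemma S_bddBelow (s : ℝ) : BddBelow {c : ℝ | 0 ≤ c ∧ (Dm L f c).toReal ≤ L - s} :=
  ⟨0, fun c hc => hc.1⟩

lemma S_nonempty (hrange : ∀ t ∈ Set.Icc 0 L, f t ∈ Set.Icc (0:ℝ) Real.pi)
    {s : ℝ} (hs : s ≤ L) :
    ({c : ℝ | 0 ≤ c ∧ (Dm L f c).toReal ≤ L - s}).Nonempty := by
  refine ⟨Real.pi + 1, by positivity, ?_⟩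
  have : {t : ℝ | t ∈ Set.Icc 0 L ∧ Real.pi + 1 ≤ f t} = ∅ := by
    ext t; simp only [mem_setOf_eq, mem_empty_iff_false, iff_false, not_and]
    intro ht h
    have := (hrange t ht).2
    linarith
  have h0 : Dm L f (Real.pi + 1) = 0 := by rw [Dm, this]; simp
  show (Dm L f (Real.pi + 1)).toReal ≤ L - s
  rw [h0]; simp; linarith

lemma ndRearr_nonneg_s10 (hrange : ∀ t ∈ Set.Icc 0 L, f t ∈ Set.Icc (0:ℝ) Real.pi)
    {s : ℝ} (hs : s ≤ L) : 0 ≤ ndRearr L f s :=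
  le_csInf (S_nonempty hrange hs) (fun c hc => hc.1)

lemma ndRearr_mono (hrange : ∀ t ∈ Set.Icc 0 L, f t ∈ Set.Icc (0:ℝ) Real.pi)
    {s s' : ℝ} (h : s ≤ s') (hs' : s' ≤ L) : ndRearr L f s ≤ ndRearr L f s' := by
  refine csInf_le_csInf (S_bddBelow s) (S_nonempty hrange hs') ?_
  intro c hc
  exact ⟨hc.1, by linarith [hc.2]⟩

lemma ndRearr_le_pi (hrange : ∀ t ∈ Set.Icc 0 L, f t ∈ Set.Icc (0:ℝ) Real.pi)
    {s : ℝ} (hs : s ≤ L) : ndRearr L f s ≤ Real.pi := by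
  refine le_of_forall_pos_le_add (fun ε hε => ?_)
  refine csInf_le (S_bddBelow s) ⟨by positivity, ?_⟩
  have : {t : ℝ | t ∈ Set.Icc 0 L ∧ Real.pi + ε ≤ f t} = ∅ := by
    ext t; simp only [mem_setOf_eq, mem_empty_iff_false, iff_false, not_and]
    intro ht h
    have := (hrange t ht).2
    linarith
  have h0 : Dm L f (Real.pi + ε) = 0 := by rw [Dm, this]; simp
  show (Dm L f (Real.pi + ε)).toReal ≤ L - s
  rw [h0]; simp; linarith


lemma claimB (hf : Measurable f) {c : ℝ} (hc : 0 < c)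
    {s : ℝ} (hs : s ∈ Set.Icc 0 L) (h : s < L - (Dm L f c).toReal) :
    ∃ c', 0 ≤ c' ∧ c' < c ∧ (Dm L f c').toReal ≤ L - s := by
  -- left continuity
  set A : ℕ → Set ℝ := fun n => {t : ℝ | t ∈ Set.Icc 0 L ∧ c - 1/(n+1) ≤ f t} with hA
  have hmeas : ∀ n, NullMeasurableSet (A n) volume := by
    intro n
    exact (measurableSet_Icc.inter (hf measurableSet_Ici)).nullMeasurableSet
  have hanti : Antitone A := by
    intro n m hnm t ht
    refine ⟨ht.1, le_trans ?_ ht.2⟩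
    have : (1:ℝ)/(m+1) ≤ 1/(n+1) := by
      apply one_div_le_one_div_of_le <;> [positivity; exact_mod_cast by linarith]
    linarith
  have hfin : ∃ n, volume (A n) ≠ ⊤ := by
    refine ⟨0, ?_⟩
    exact ne_top_of_le_ne_top (by simp : volume (Set.Icc (0:ℝ) L) ≠ ⊤)
      (measure_mono (fun t ht => ht.1))
  have hInter : ⋂ n, A n = {t : ℝ | t ∈ Set.Icc 0 L ∧ c ≤ f t} := by
    ext t
    simp only [mem_iInter, hA, mem_setOf_eq]
    constructor
    · intro h'
      refine ⟨(h' 0).1, ?_⟩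
      by_contra hc'
      push_neg at hc'
      obtain ⟨n, hn⟩ := exists_nat_one_div_lt (show 0 < c - f t by linarith)
      have := (h' n).2
      linarith
    · intro h' n
      have : (0:ℝ) < 1/(n+1) := by positivity
      exact ⟨h'.1, by linarith [h'.2]⟩
  have hiInf : (⨅ n, volume (A n)) = Dm L f c := by
    rw [← hanti.measure_iInter hmeas hfin, hInter]; rfl
  have hd0 : 0 ≤ (Dm L f c).toReal := ENNReal.toReal_nonneg
  have hlt : Dm L f c < ENNReal.ofReal (L - s) := by
    rw [← ENNReal.ofReal_toReal (show Dm L f c ≠ ⊤ from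
      ne_top_of_le_ne_top (by simp : volume (Set.Icc (0:ℝ) L) ≠ ⊤)
        (measure_mono (fun t ht => ht.1)))]
    exact ENNReal.ofReal_lt_ofReal_iff (by linarith) |>.mpr (by linarith)
  rw [← hiInf] at hlt
  obtain ⟨n, hn⟩ := iInf_lt_iff.mp hlt
  refine ⟨max 0 (c - 1/(n+1)), le_max_left _ _, ?_, ?_⟩
  · have : (0:ℝ) < 1/(n+1) := by positivity
    exact max_lt hc (by linarith)
  · have h1 : Dm L f (max 0 (c - 1/(n+1))) ≤ volume (A n) :=
      measure_mono (fun t ht => ⟨ht.1, le_trans (le_max_right _ _) ht.2⟩)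
    have h2 : Dm L f (max 0 (c - 1/(n+1))) ≤ ENNReal.ofReal (L - s) :=
      le_trans h1 hn.le
    have := ENNReal.toReal_mono (a := Dm L f (max 0 (c-1/(n+1)))) ofReal_ne_top h2
    rwa [ENNReal.toReal_ofReal (by linarith)] at this

lemma ndRearr_lt (hf : Measurable f) {c : ℝ} (hc : 0 < c)
    {s : ℝ} (hs : s ∈ Set.Icc 0 L) (h : s < L - (Dm L f c).toReal) :
    ndRearr L f s < c := by
  obtain ⟨c', h0, h1, h2⟩ := claimB hf hc hs h
  exact lt_of_le_of_lt (csInf_le (S_bddBelow s) ⟨h0, h2⟩) h1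

lemma claimA (hrange : ∀ t ∈ Set.Icc 0 L, f t ∈ Set.Icc (0:ℝ) Real.pi)
    {c : ℝ} {s : ℝ} (hs : s ∈ Set.Icc 0 L) (h : L - (Dm L f c).toReal < s) :
    c ≤ ndRearr L f s := by
  refine le_csInf (S_nonempty hrange hs.2) ?_
  intro c' hc'
  by_contra hlt
  push_neg at hlt
  have := Dm_toReal_anti (L := L) (f := f) hlt.le
  linarith [show (Dm L f c').toReal ≤ L - s from hc'.2]

/-- measure of superlevel set of the rearrangement -/
lemma vol_superlevel (hf : Measurable f)
    (hrange : ∀ t ∈ Set.Icc 0 L, f t ∈ Set.Icc (0:ℝ) Real.pi) (hL : 0 ≤ L)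
    {c : ℝ} (hc : 0 < c) :
    volume {s : ℝ | s ∈ Set.Icc 0 L ∧ c ≤ ndRearr L f s} = Dm L f c := by
  set dc := (Dm L f c).toReal with hdc
  have hdc0 : 0 ≤ dc := ENNReal.toReal_nonneg
  have hdcL : dc ≤ L := Dm_toReal_le hL c
  have hsub1 : Ioc (L - dc) L ⊆ {s : ℝ | s ∈ Set.Icc 0 L ∧ c ≤ ndRearr L f s} := by
    intro s hsmem
    have hs : s ∈ Set.Icc 0 L := ⟨by linarith [hsmem.1, hsmem.2], hsmem.2⟩
    exact ⟨hs, claimA hrange hs hsmem.1⟩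
  have hsub2 : {s : ℝ | s ∈ Set.Icc 0 L ∧ c ≤ ndRearr L f s} ⊆ Icc (L - dc) L := by
    intro s hsmem
    refine ⟨?_, hsmem.1.2⟩
    by_contra hlt
    push_neg at hlt
    exact absurd hsmem.2 (not_le.mpr (ndRearr_lt hf hc hsmem.1 hlt))
  have h1 : volume (Ioc (L - dc) L) ≤ volume {s : ℝ | s ∈ Set.Icc 0 L ∧ c ≤ ndRearr L f s} :=
    measure_mono hsub1
  have h2 : volume {s : ℝ | s ∈ Set.Icc 0 L ∧ c ≤ ndRearr L f s} ≤ volume (Icc (L - dc) L) :=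
    measure_mono hsub2
  have e1 : volume (Ioc (L - dc) L) = ENNReal.ofReal dc := by
    rw [Real.volume_Ioc]; congr 1; ring
  have e2 : volume (Icc (L - dc) L) = ENNReal.ofReal dc := by
    rw [Real.volume_Icc]; congr 1; ring
  rw [e1] at h1
  rw [e2] at h2
  have heq : volume {s : ℝ | s ∈ Set.Icc 0 L ∧ c ≤ ndRearr L f s} = ENNReal.ofReal dc :=
    le_antisymm h2 h1
  rw [heq, hdc, ENNReal.ofReal_toReal (Dm_ne_top c)]

/-- equimeasurability for strict superlevel sets -/
lemma vol_strict_eq (hf : Measurable f)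
    (hrange : ∀ t ∈ Set.Icc 0 L, f t ∈ Set.Icc (0:ℝ) Real.pi) (hL : 0 ≤ L)
    {c : ℝ} (hc : 0 ≤ c) :
    volume {s : ℝ | s ∈ Set.Icc 0 L ∧ c < f s}
      = volume {s : ℝ | s ∈ Set.Icc 0 L ∧ c < ndRearr L f s} := by
  have key : ∀ g : ℝ → ℝ, {s : ℝ | s ∈ Set.Icc 0 L ∧ c < g s}
      = ⋃ n : ℕ, {s : ℝ | s ∈ Set.Icc 0 L ∧ c + 1/(n+1) ≤ g s} := by
    intro g
    ext s
    simp only [mem_iUnion, mem_setOf_eq]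
    constructor
    · rintro ⟨h1, h2⟩
      obtain ⟨n, hn⟩ := exists_nat_one_div_lt (show 0 < g s - c by linarith)
      exact ⟨n, h1, by linarith⟩
    · rintro ⟨n, h1, h2⟩
      have : (0:ℝ) < 1/(n+1) := by positivity
      exact ⟨h1, by linarith⟩
  have hdir : ∀ g : ℝ → ℝ, Directed (· ⊆ ·)
      (fun n : ℕ => {s : ℝ | s ∈ Set.Icc 0 L ∧ c + 1/(n+1) ≤ g s}) := by
    intro g
    refine (Monotone.directed_le ?_)
    intro n m hnm s hsm
    refine ⟨hsm.1, le_trans ?_ hsm.2⟩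
    have : (1:ℝ)/(m+1) ≤ 1/(n+1) := by
      apply one_div_le_one_div_of_le <;> [positivity; exact_mod_cast by linarith]
    linarith
  rw [key f, key (ndRearr L f), Directed.measure_iUnion (hdir f),
    Directed.measure_iUnion (hdir (ndRearr L f))]
  congr 1
  ext n
  have hpos : (0:ℝ) < c + 1/(n+1) := by positivity
  rw [vol_superlevel hf hrange hL hpos]
  rfl

end Aux


lemma bathtub {L : ℝ} (hL : 0 ≤ L) (A B : Set ℝ)
    (hAmeas : MeasurableSet A) (hBmeas : MeasurableSet B)
    (hA : A ⊆ Set.Icc 0 L) (hB : B ⊆ Set.Icc 0 L)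
    (hAB : volume A = volume B)
    (hBup : ∀ s ∈ B, ∀ s', s ≤ s' → s' ≤ L → s' ∈ B) :
    ∫⁻ s in A, ENNReal.ofReal s ≤ ∫⁻ s in B, ENNReal.ofReal s := by
  set m := volume B with hm
  have hmfin : m ≠ ⊤ := by
    refine ne_top_of_le_ne_top (by simp : volume (Set.Icc (0:ℝ) L) ≠ ⊤) (measure_mono hB)
  have hmL : m.toReal ≤ L := by
    have h1 := ENNReal.toReal_mono (by simp : volume (Set.Icc (0:ℝ) L) ≠ ⊤) (measure_mono hB)
    rw [Real.volume_Icc, ENNReal.toReal_ofReal (by linarith)] at h1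
    linarith
  set α := L - m.toReal with hα
  have hα0 : 0 ≤ α := by simp [hα]; linarith
  set I := Set.Ioc α L with hI
  have hIB : I ⊆ B := by
    intro s hsI
    by_contra hsB
    have hBsub : B ⊆ Set.Ioc s L := by
      intro b hb
      refine ⟨?_, (hB hb).2⟩
      by_contra hbs
      push_neg at hbs
      exact hsB (hBup b hb s hbs hsI.2)
    have h1 : m ≤ ENNReal.ofReal (L - s) := by
      calc m ≤ volume (Set.Ioc s L) := measure_mono hBsub
        _ = ENNReal.ofReal (L - s) := Real.volume_Ioc
    have h2 : L - s < m.toReal := by linarith [hsI.1, hsI.2]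
    have h3 : m.toReal ≤ L - s := by
      have := ENNReal.toReal_mono ofReal_ne_top h1
      rwa [ENNReal.toReal_ofReal (by linarith [hsI.2] : 0 ≤ L - s)] at this
    linarith
  have hvolI : volume I = m := by
    rw [hI, Real.volume_Ioc, hα]
    rw [show L - (L - m.toReal) = m.toReal by ring, ENNReal.ofReal_toReal hmfin]
  -- B =ᵐ I
  have hBI_ae : B =ᵐ[volume] I := by
    have hsplit : volume B = volume I + volume (B \ I) := by
      rw [← measure_inter_add_diff B measurableSet_Ioc, Set.inter_eq_right.mpr hIB]
    have hBd : volume (B \ I) = 0 := by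
      have : volume I + volume (B \ I) = volume I + 0 := by
        rw [add_zero, ← hsplit, hvolI, hm]
      exact (ENNReal.add_right_inj (by rw [hvolI]; exact hmfin)).mp this
    rw [MeasureTheory.ae_eq_set]
    constructor
    · exact hBd
    · rw [Set.diff_eq_empty.mpr hIB]; simp
  have hintB : ∫⁻ s in B, ENNReal.ofReal s = ∫⁻ s in I, ENNReal.ofReal s :=
    setLIntegral_congr hBI_ae
  rw [hintB]
  -- split A into A cap I and A minus I
  have hunionA : (A ∩ I) ∪ (A \ I) = A := by
    simp [Set.inter_union_diff]
  have hAsplit : ∫⁻ s in A, ENNReal.ofReal s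
      = (∫⁻ s in A ∩ I, ENNReal.ofReal s) + ∫⁻ s in A \ I, ENNReal.ofReal s := by
    rw [← lintegral_union (hAmeas.diff measurableSet_Ioc)
      (Set.disjoint_sdiff_right.mono_left Set.inter_subset_right), hunionA]
  have hunionI : (I ∩ A) ∪ (I \ A) = I := by
    simp [Set.inter_union_diff]
  have hIsplit : ∫⁻ s in I, ENNReal.ofReal s
      = (∫⁻ s in I ∩ A, ENNReal.ofReal s) + ∫⁻ s in I \ A, ENNReal.ofReal s := by
    rw [← lintegral_union (measurableSet_Ioc.diff hAmeas)
      (Set.disjoint_sdiff_right.mono_left Set.inter_subset_right), hunionI]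
  rw [hAsplit, hIsplit, Set.inter_comm A I]
  refine add_le_add (le_refl _) ?_
  -- measures of the two difference sets agree
  have hvol_eq : volume (A \ I) = volume (I \ A) := by
    have e1 : volume (A ∩ I) + volume (A \ I) = volume A :=
      measure_inter_add_diff A measurableSet_Ioc
    have e2 : volume (I ∩ A) + volume (I \ A) = volume I :=
      measure_inter_add_diff I hAmeas
    rw [Set.inter_comm I A] at e2
    have : volume (A ∩ I) + volume (A \ I) = volume (A ∩ I) + volume (I \ A) := by
      rw [e1, e2, hvolI, hAB]
    refine (ENNReal.add_right_inj ?_).mp this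
    exact ne_top_of_le_ne_top (by simp : volume (Set.Icc (0:ℝ) L) ≠ ⊤)
      (measure_mono (fun t ht => hA ht.1))
  calc ∫⁻ s in A \ I, ENNReal.ofReal s
      ≤ ∫⁻ _ in A \ I, ENNReal.ofReal α := by
        refine setLIntegral_mono' (hAmeas.diff measurableSet_Ioc) ?_
        intro x hx
        refine ENNReal.ofReal_le_ofReal ?_
        have hx1 := hA hx.1
        have hx2 := hx.2
        simp only [hI, Set.mem_Ioc, not_and, not_le] at hx2
        by_contra hgt
        push_neg at hgt
        linarith [hx2 hgt, hx1.2]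
    _ = ENNReal.ofReal α * volume (A \ I) := setLIntegral_const _ _
    _ = ENNReal.ofReal α * volume (I \ A) := by rw [hvol_eq]
    _ = ∫⁻ _ in I \ A, ENNReal.ofReal α := (setLIntegral_const _ _).symm
    _ ≤ ∫⁻ s in I \ A, ENNReal.ofReal s := by
        refine setLIntegral_mono' (measurableSet_Ioc.diff hAmeas) ?_
        intro x hx
        exact ENNReal.ofReal_le_ofReal (le_of_lt hx.1.1)


lemma ptwise {s x : ℝ} (hs : 0 ≤ s) (hx : x ∈ Set.Icc 0 Real.pi) :
    ENNReal.ofReal (s * (1 - Real.cos x)) = ∫⁻ c in Set.Ioc 0 x, ENNReal.ofReal (s * Real.sin c) := by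
  have hint : IntegrableOn (fun c => s * Real.sin c) (Set.Ioc 0 x) volume :=
    (continuous_const.mul Real.continuous_sin).integrableOn_Ioc
  have hnn : 0 ≤ᵐ[volume.restrict (Set.Ioc 0 x)] fun c => s * Real.sin c := by
    refine ae_restrict_of_forall_mem measurableSet_Ioc (fun c hc => ?_)
    exact mul_nonneg hs (Real.sin_nonneg_of_nonneg_of_le_pi hc.1.le (le_trans hc.2 hx.2))
  rw [← MeasureTheory.ofReal_integral_eq_lintegral_ofReal hint hnn]
  congr 1
  rw [← intervalIntegral.integral_of_le hx.1, intervalIntegral.integral_const_mul,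
    integral_sin, Real.cos_zero]

lemma layercake {L : ℝ} (hL : 0 ≤ L) {h : ℝ → ℝ} (hm : Measurable h)
    (hr : ∀ s, h s ∈ Set.Icc 0 Real.pi) :
    ∫⁻ s in Set.Ioc 0 L, ENNReal.ofReal (s * (1 - Real.cos (h s)))
      = ∫⁻ c in Set.Ioc 0 Real.pi,
          ENNReal.ofReal (Real.sin c) * ∫⁻ s in Set.Ioc 0 L ∩ {s | c < h s}, ENNReal.ofReal s := by
  set T : Set (ℝ × ℝ) := {p : ℝ × ℝ | p.2 < h p.1} with hT
  have hTmeas : MeasurableSet T := by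
    have : T = {p : ℝ × ℝ | p.2 - h p.1 < 0} := by ext p; simp [hT, sub_neg]
    rw [this]
    exact measurableSet_lt (measurable_snd.sub (hm.comp measurable_fst)) measurable_const
  set F : ℝ × ℝ → ℝ≥0∞ := fun p => T.indicator (fun q => ENNReal.ofReal (q.1 * Real.sin q.2)) p
    with hF
  have hFmeas : Measurable F :=
    (Measurable.indicator ((measurable_fst.mul (Real.measurable_sin.comp measurable_snd)).ennreal_ofReal) hTmeas)
  -- step 1: pointwise identity on Ioc 0 L
  have step1 : ∀ s ∈ Set.Ioc (0:ℝ) L,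
      ENNReal.ofReal (s * (1 - Real.cos (h s))) = ∫⁻ c in Set.Ioc 0 Real.pi, F (s, c) := by
    intro s hs
    rw [ptwise hs.1.le (hr s)]
    have e1 : ∀ c : ℝ, F (s, c) = (Set.Iio (h s)).indicator (fun c => ENNReal.ofReal (s * Real.sin c)) c := by
      intro c
      simp only [hF, Set.indicator_apply, hT, Set.mem_setOf_eq, Set.mem_Iio]
    calc ∫⁻ c in Set.Ioc 0 (h s), ENNReal.ofReal (s * Real.sin c)
        = ∫⁻ c in Set.Ioo 0 (h s), ENNReal.ofReal (s * Real.sin c) :=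
          (setLIntegral_congr (Ioo_ae_eq_Ioc (μ := volume) (a := (0:ℝ)) (b := h s))).symm
      _ = ∫⁻ c in Set.Ioc 0 Real.pi ∩ Set.Iio (h s), ENNReal.ofReal (s * Real.sin c) := by
          have hseteq : Set.Ioo (0:ℝ) (h s) = Set.Ioc 0 Real.pi ∩ Set.Iio (h s) := by
            ext c
            simp only [Set.mem_Ioo, Set.mem_inter_iff, Set.mem_Ioc, Set.mem_Iio]
            constructor
            · rintro ⟨h1, h2⟩
              exact ⟨⟨h1, le_trans h2.le (hr s).2⟩, h2⟩
            · rintro ⟨⟨h1, _⟩, h2⟩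
              exact ⟨h1, h2⟩
          rw [hseteq]
      _ = ∫⁻ c in Set.Ioc 0 Real.pi, (Set.Iio (h s)).indicator (fun c => ENNReal.ofReal (s * Real.sin c)) c := by
          rw [lintegral_indicator measurableSet_Iio, Measure.restrict_restrict measurableSet_Iio,
            Set.inter_comm]
      _ = ∫⁻ c in Set.Ioc 0 Real.pi, F (s, c) := by
          refine lintegral_congr (fun c => (e1 c).symm)
  -- step 2: rewrite whole integral and swap
  calc ∫⁻ s in Set.Ioc 0 L, ENNReal.ofReal (s * (1 - Real.cos (h s)))
      = ∫⁻ s in Set.Ioc 0 L, ∫⁻ c in Set.Ioc 0 Real.pi, F (s, c) := by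
        refine setLIntegral_congr_fun measurableSet_Ioc ?_
        exact step1
    _ = ∫⁻ c in Set.Ioc 0 Real.pi, ∫⁻ s in Set.Ioc 0 L, F (s, c) := by
        apply MeasureTheory.lintegral_lintegral_swap
        exact hFmeas.aemeasurable
    _ = ∫⁻ c in Set.Ioc 0 Real.pi,
          ENNReal.ofReal (Real.sin c) * ∫⁻ s in Set.Ioc 0 L ∩ {s | c < h s}, ENNReal.ofReal s := by
        refine setLIntegral_congr_fun measurableSet_Ioc ?_
        intro c hc
        have e2 : ∀ s : ℝ, F (s, c) = ({s : ℝ | c < h s}).indicator (fun s => ENNReal.ofReal (Real.sin c) * ENNReal.ofReal s) s := by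
          intro s
          simp only [hF, Set.indicator_apply, hT, Set.mem_setOf_eq]
          rw [show s * Real.sin c = Real.sin c * s by ring, ENNReal.ofReal_mul (Real.sin_nonneg_of_nonneg_of_le_pi hc.1.le hc.2)]
        calc ∫⁻ s in Set.Ioc 0 L, F (s, c)
            = ∫⁻ s in Set.Ioc 0 L, ({s : ℝ | c < h s}).indicator (fun s => ENNReal.ofReal (Real.sin c) * ENNReal.ofReal s) s :=
              lintegral_congr (fun s => e2 s)
          _ = ∫⁻ s in Set.Ioc 0 L ∩ {s : ℝ | c < h s}, ENNReal.ofReal (Real.sin c) * ENNReal.ofReal s := by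
              have hms : MeasurableSet {s : ℝ | c < h s} := hm measurableSet_Ioi
              rw [lintegral_indicator hms, Measure.restrict_restrict hms, Set.inter_comm]
          _ = ENNReal.ofReal (Real.sin c) * ∫⁻ s in Set.Ioc 0 L ∩ {s : ℝ | c < h s}, ENNReal.ofReal s := by
              rw [lintegral_const_mul _ measurable_ofReal]

theorem stmt_10 (L : ℝ) (hL : 0 < L) (θ : ℝ → ℝ) (K : NNReal)
    (hθ : LipschitzOnWith K θ (Set.Icc 0 L))
    (hrange : ∀ s ∈ Set.Icc 0 L, θ s ∈ Set.Icc (0:ℝ) Real.pi) :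
    (∫ s in (0:ℝ)..L, s * (1 - Real.cos (θ s))
        ≤ ∫ s in (0:ℝ)..L, s * (1 - Real.cos (ndRearr L θ s))) ∧
    (-∫ s in (0:ℝ)..L, s * Real.cos (θ s)
        ≤ -∫ s in (0:ℝ)..L, s * Real.cos (ndRearr L θ s)) := by
  have hL0 : (0:ℝ) ≤ L := hL.le
  -- continuous extension of θ
  set proj : ℝ → ℝ := fun s => max 0 (min s L) with hproj
  have hprojmem : ∀ s, proj s ∈ Set.Icc 0 L := fun s =>
    ⟨le_max_left _ _, max_le hL0 (min_le_right _ _)⟩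
  set f : ℝ → ℝ := fun s => θ (proj s) with hf
  have hfeq : ∀ s ∈ Set.Icc 0 L, f s = θ s := by
    intro s hs
    have : proj s = s := by
      simp only [hproj, min_eq_left hs.2, max_eq_right hs.1]
    simp only [hf, this]
  have hfcont : Continuous f := by
    refine (hθ.continuousOn).comp_continuous ?_ hprojmem
    exact continuous_const.max (continuous_id.min continuous_const)
  have hfmeas : Measurable f := hfcont.measurable
  have hfrange : ∀ s, f s ∈ Set.Icc (0:ℝ) Real.pi := fun s => hrange _ (hprojmem s)
  have hfrange' : ∀ s ∈ Set.Icc 0 L, f s ∈ Set.Icc (0:ℝ) Real.pi := fun s _ => hfrange s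
  -- ndRearr with θ and with f agree
  have hndeq : ndRearr L θ = ndRearr L f := by
    funext s
    unfold ndRearr
    congr 1
    ext c
    have hset : {t : ℝ | t ∈ Set.Icc 0 L ∧ c ≤ θ t} = {t : ℝ | t ∈ Set.Icc 0 L ∧ c ≤ f t} := by
      ext t
      constructor
      · rintro ⟨ht, hc⟩; exact ⟨ht, by rwa [hfeq t ht]⟩
      · rintro ⟨ht, hc⟩; exact ⟨ht, by rwa [hfeq t ht] at hc⟩
    simp only [Set.mem_setOf_eq]
    rw [hset]
  -- monotone extension of the rearrangement
  set G : ℝ → ℝ := fun s => ndRearr L f (min s L) with hG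
  have hGmono : Monotone G := by
    intro s s' hss'
    exact ndRearr_mono hfrange' (min_le_min_right L hss') (min_le_right _ _)
  have hGmeas : Measurable G := hGmono.measurable
  have hGeq : ∀ s ∈ Set.Icc 0 L, G s = ndRearr L f s := by
    intro s hs
    simp only [hG, min_eq_left hs.2]
  have hGrange : ∀ s, G s ∈ Set.Icc (0:ℝ) Real.pi := fun s =>
    ⟨ndRearr_nonneg_s10 hfrange' (min_le_right _ _), ndRearr_le_pi hfrange' (min_le_right _ _)⟩
  -- slice inequality
  have hslice : ∀ c ∈ Set.Ioc (0:ℝ) Real.pi,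
      (∫⁻ s in Set.Ioc 0 L ∩ {s : ℝ | c < f s}, ENNReal.ofReal s)
        ≤ ∫⁻ s in Set.Ioc 0 L ∩ {s : ℝ | c < G s}, ENNReal.ofReal s := by
    intro c hc
    set A := Set.Ioc 0 L ∩ {s : ℝ | c < f s} with hA
    set B := Set.Ioc 0 L ∩ {s : ℝ | c < G s} with hB
    have hAmeas : MeasurableSet A := measurableSet_Ioc.inter (hfmeas measurableSet_Ioi)
    have hBmeas : MeasurableSet B := measurableSet_Ioc.inter (hGmeas measurableSet_Ioi)
    have hAsub : A ⊆ Set.Icc 0 L := fun s hs => ⟨hs.1.1.le, hs.1.2⟩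
    have hBsub : B ⊆ Set.Icc 0 L := fun s hs => ⟨hs.1.1.le, hs.1.2⟩
    -- relate Ioc-based sets to Icc-based sets up to null sets
    have hvol : ∀ u : ℝ → ℝ, volume (Set.Ioc 0 L ∩ {s : ℝ | c < u s})
        = volume {s : ℝ | s ∈ Set.Icc 0 L ∧ c < u s} := by
      intro u
      refine le_antisymm (measure_mono (fun s hs => ⟨⟨hs.1.1.le, hs.1.2⟩, hs.2⟩)) ?_
      have hsub : {s : ℝ | s ∈ Set.Icc 0 L ∧ c < u s}
          ⊆ (Set.Ioc 0 L ∩ {s : ℝ | c < u s}) ∪ {(0:ℝ)} := by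
        intro s hs
        rcases eq_or_lt_of_le hs.1.1 with h0 | h0
        · exact Or.inr (by simp [← h0])
        · exact Or.inl ⟨⟨h0, hs.1.2⟩, hs.2⟩
      calc volume {s : ℝ | s ∈ Set.Icc 0 L ∧ c < u s}
          ≤ volume ((Set.Ioc 0 L ∩ {s : ℝ | c < u s}) ∪ {(0:ℝ)}) := measure_mono hsub
        _ ≤ volume (Set.Ioc 0 L ∩ {s : ℝ | c < u s}) + volume {(0:ℝ)} := measure_union_le _ _
        _ = volume (Set.Ioc 0 L ∩ {s : ℝ | c < u s}) := by simp
    have hIccGnd : {s : ℝ | s ∈ Set.Icc 0 L ∧ c < G s}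
        = {s : ℝ | s ∈ Set.Icc 0 L ∧ c < ndRearr L f s} := by
      ext s
      constructor
      · rintro ⟨hs, h'⟩; exact ⟨hs, by rwa [hGeq s hs] at h'⟩
      · rintro ⟨hs, h'⟩; exact ⟨hs, by rwa [hGeq s hs]⟩
    have hAB : volume A = volume B := by
      rw [hA, hB, hvol f, hvol G, hIccGnd]
      exact vol_strict_eq hfmeas hfrange' hL0 hc.1.le
    have hBup : ∀ s ∈ B, ∀ s', s ≤ s' → s' ≤ L → s' ∈ B := by
      intro s hs s' hss' hs'L
      exact ⟨⟨lt_of_lt_of_le hs.1.1 hss', hs'L⟩, lt_of_lt_of_le hs.2 (hGmono hss')⟩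
    exact bathtub hL0 A B hAmeas hBmeas hAsub hBsub hAB hBup
  -- master lintegral inequality
  have hmain : ∫⁻ s in Set.Ioc 0 L, ENNReal.ofReal (s * (1 - Real.cos (f s)))
      ≤ ∫⁻ s in Set.Ioc 0 L, ENNReal.ofReal (s * (1 - Real.cos (G s))) := by
    rw [layercake hL0 hfmeas hfrange, layercake hL0 hGmeas hGrange]
    refine lintegral_mono_ae ?_
    refine ae_restrict_of_forall_mem measurableSet_Ioc (fun c hc => ?_)
    exact mul_le_mul_right (hslice c hc) _
  -- finiteness of the right-hand side
  have hfin : ∫⁻ s in Set.Ioc 0 L, ENNReal.ofReal (s * (1 - Real.cos (G s))) ≠ ⊤ := by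
    have hbd : ∫⁻ s in Set.Ioc 0 L, ENNReal.ofReal (s * (1 - Real.cos (G s)))
        ≤ ENNReal.ofReal (L * 2) * volume (Set.Ioc (0:ℝ) L) := by
      rw [← setLIntegral_const (Set.Ioc (0:ℝ) L) (ENNReal.ofReal (L * 2))]
      refine setLIntegral_mono' measurableSet_Ioc (fun s hs => ?_)
      refine ENNReal.ofReal_le_ofReal ?_
      have h1 := Real.neg_one_le_cos (G s)
      have h2 := Real.cos_le_one (G s)
      nlinarith [hs.1.le, hs.2]
    refine ne_top_of_le_ne_top ?_ hbd
    rw [Real.volume_Ioc]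
    exact ENNReal.mul_ne_top ENNReal.ofReal_ne_top ENNReal.ofReal_ne_top
  -- conversion between Bochner integral and lower integral
  have hconv : ∀ u : ℝ → ℝ, Measurable u →
      ∫ s in (0:ℝ)..L, s * (1 - Real.cos (u s))
        = (∫⁻ s in Set.Ioc 0 L, ENNReal.ofReal (s * (1 - Real.cos (u s)))).toReal := by
    intro u hu
    rw [intervalIntegral.integral_of_le hL0]
    rw [MeasureTheory.integral_eq_lintegral_of_nonneg_ae]
    · refine ae_restrict_of_forall_mem measurableSet_Ioc (fun s hs => ?_)
      have h1 := Real.cos_le_one (u s)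
      have hs0 : (0:ℝ) ≤ s := hs.1.le
      show (0:ℝ) ≤ s * (1 - Real.cos (u s))
      nlinarith
    · exact (measurable_id.mul ((Real.continuous_cos.measurable.comp hu).const_sub 1)).aestronglyMeasurable
  -- replace θ by f and ndRearr by G in the interval integrals
  have euIcc : Set.uIcc (0:ℝ) L = Set.Icc 0 L := Set.uIcc_of_le hL0
  have e1 : ∫ s in (0:ℝ)..L, s * (1 - Real.cos (θ s)) = ∫ s in (0:ℝ)..L, s * (1 - Real.cos (f s)) := by
    refine intervalIntegral.integral_congr (fun s hs => ?_)
    rw [euIcc] at hs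
    rw [hfeq s hs]
  have e2 : ∫ s in (0:ℝ)..L, s * (1 - Real.cos (ndRearr L θ s))
      = ∫ s in (0:ℝ)..L, s * (1 - Real.cos (G s)) := by
    refine intervalIntegral.integral_congr (fun s hs => ?_)
    rw [euIcc] at hs
    rw [hndeq, hGeq s hs]
  have e3 : ∫ s in (0:ℝ)..L, s * Real.cos (θ s) = ∫ s in (0:ℝ)..L, s * Real.cos (f s) := by
    refine intervalIntegral.integral_congr (fun s hs => ?_)
    rw [euIcc] at hs
    rw [hfeq s hs]
  have e4 : ∫ s in (0:ℝ)..L, s * Real.cos (ndRearr L θ s)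
      = ∫ s in (0:ℝ)..L, s * Real.cos (G s) := by
    refine intervalIntegral.integral_congr (fun s hs => ?_)
    rw [euIcc] at hs
    rw [hndeq, hGeq s hs]
  -- conjunct 1
  have hP1 : ∫ s in (0:ℝ)..L, s * (1 - Real.cos (θ s))
      ≤ ∫ s in (0:ℝ)..L, s * (1 - Real.cos (ndRearr L θ s)) := by
    rw [e1, e2, hconv f hfmeas, hconv G hGmeas]
    exact ENNReal.toReal_mono hfin hmain
  refine ⟨hP1, ?_⟩
  -- conjunct 2 via subtraction
  have hintid : IntervalIntegrable (fun s : ℝ => s) volume 0 L :=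
    continuous_id.intervalIntegrable _ _
  have hintf : IntervalIntegrable (fun s => s * Real.cos (f s)) volume 0 L :=
    (continuous_id.mul (Real.continuous_cos.comp hfcont)).intervalIntegrable _ _
  have hintG : IntervalIntegrable (fun s => s * Real.cos (G s)) volume 0 L := by
    rw [intervalIntegrable_iff_integrableOn_Ioc_of_le hL0]
    refine Measure.integrableOn_of_bounded (by simp [Real.volume_Ioc]) ?_ (M := L) ?_
    · exact (measurable_id.mul (Real.continuous_cos.measurable.comp hGmeas)).aestronglyMeasurable
    · refine ae_restrict_of_forall_mem measurableSet_Ioc (fun s hs => ?_)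
      have h1 := Real.neg_one_le_cos (G s)
      have h2 := Real.cos_le_one (G s)
      have : |s * Real.cos (G s)| ≤ |s| := by
        rw [abs_mul]
        nlinarith [abs_nonneg s, abs_cos_le_one (G s)]
      calc ‖s * Real.cos (G s)‖ ≤ |s| := this
        _ ≤ L := by rw [abs_of_pos hs.1]; exact hs.2
  have d1 : ∫ s in (0:ℝ)..L, s * (1 - Real.cos (f s))
      = (∫ s in (0:ℝ)..L, s) - ∫ s in (0:ℝ)..L, s * Real.cos (f s) := by
    rw [← intervalIntegral.integral_sub hintid hintf]
    refine intervalIntegral.integral_congr (fun s _ => ?_)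
    ring
  have d2 : ∫ s in (0:ℝ)..L, s * (1 - Real.cos (G s))
      = (∫ s in (0:ℝ)..L, s) - ∫ s in (0:ℝ)..L, s * Real.cos (G s) := by
    rw [← intervalIntegral.integral_sub hintid hintG]
    refine intervalIntegral.integral_congr (fun s _ => ?_)
    ring
  rw [e1, e2] at hP1
  rw [d1, d2] at hP1
  rw [e3, e4]
  linarith
end

section
/- Let Σ be an axisymmetric inner-convex C^{1,1} surface generated by Lipschitz θ : [0,L] → ℝ with θ(0)=0, θ(L)=π, x(s)=∫₀ˢ cos θ(t) dt, x(L)=0, x>0 on (0,L), and with nonnegative Gaussian curvature, i.e., θ'(s)·sin θ(s) ≥ 0 for a.e. s. Then with λ = L/π: 4πλ² − 2λ·∫_Σ H dA + A(Σ) ≤ 0, where ∫_Σ H dA = π∫₀ᴸ(sin θ + θ'x) ds and A(Σ) = 2π∫₀ᴸ x ds. -/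
/-!
Put `λ = L / π` and `x s = ∫₀ˢ cos θ`. Integrating `∫ (λθ - s)² d(-cos θ)` by parts three times
produces the explicit primitive `Φ = bonnesenPotential λ θ x` of
`(λθ - s)² θ' sin θ - 2λ (sin θ + θ' x) + 2x`, whence the Bonnesen identity
`∫ (λθ - s)² θ' sin θ = 2λ ∫ (sin θ + θ' x) - 2 ∫ x + Φ(L) - Φ(0)` for absolutely continuous `θ`.
The boundary conditions `θ 0 = 0`, `θ L = π`, `x 0 = x L = 0` and `λπ = L` give
`Φ(L) - Φ(0) = -4λ²`, so the left-hand side of the inequality equals `-π ∫ (λθ - s)² θ' sin θ`,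
which is `≤ 0` because `θ' sin θ ≥ 0` almost everywhere.
-/

open Real Set intervalIntegral MeasureTheory

theorem LipschitzWith.comp_absolutelyContinuousOnInterval {X Y : Type*} [PseudoMetricSpace X]
    [PseudoMetricSpace Y] {g : X → Y} {K : NNReal} {f : ℝ → X} {a b : ℝ}
    (hg : LipschitzWith K g) (hf : AbsolutelyContinuousOnInterval f a b) :
    AbsolutelyContinuousOnInterval (g ∘ f) a b := by
  unfold AbsolutelyContinuousOnInterval at *
  refine squeeze_zero (fun _ ↦ Finset.sum_nonneg fun _ _ ↦ dist_nonneg) (fun _ ↦ ?_)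
    (by simpa using hf.const_mul (K : ℝ))
  rw [Finset.mul_sum]
  exact Finset.sum_le_sum fun _ _ ↦ hg.dist_le_mul _ _

noncomputable def bonnesenPotential (lam : ℝ) (θ x : ℝ → ℝ) (s : ℝ) : ℝ :=
  2 * lam ^ 2 * (θ s * sin (θ s) + cos (θ s)) - (lam * θ s - s) ^ 2 * cos (θ s)
    - 2 * lam * (θ s * x s + s * sin (θ s)) + 2 * s * x s

section Bonnesen

variable {θ x : ℝ → ℝ} {lam : ℝ}

theorem hasDerivAt_bonnesenPotential {s θ' : ℝ} (hθ : HasDerivAt θ θ' s)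
    (hx : HasDerivAt x (cos (θ s)) s) :
    HasDerivAt (bonnesenPotential lam θ x)
      ((lam * θ s - s) ^ 2 * (θ' * sin (θ s)) - 2 * lam * (sin (θ s) + θ' * x s) + 2 * x s) s := by
  have hs := hasDerivAt_id' s
  have hu := (hθ.const_mul lam).fun_sub hs
  have := ((((hθ.fun_mul hθ.sin).fun_add hθ.cos).const_mul (2 * lam ^ 2)).fun_sub
    ((hu.fun_pow 2).fun_mul hθ.cos)).fun_sub
    (((hθ.fun_mul hx).fun_add (hs.fun_mul hθ.sin)).const_mul (2 * lam)) |>.fun_add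
    ((hs.const_mul 2).fun_mul hx)
  refine this.congr_deriv ?_
  norm_num
  ring

theorem absolutelyContinuousOnInterval_bonnesenPotential {a b : ℝ}
    (hθ : AbsolutelyContinuousOnInterval θ a b) (hx : AbsolutelyContinuousOnInterval x a b) :
    AbsolutelyContinuousOnInterval (bonnesenPotential lam θ x) a b := by
  have hs : AbsolutelyContinuousOnInterval (fun s : ℝ ↦ s) a b :=
    LipschitzWith.id.lipschitzOnWith.absolutelyContinuousOnInterval
  have hsin := lipschitzWith_sin.comp_absolutelyContinuousOnInterval hθ
  have hcos := lipschitzWith_cos.comp_absolutelyContinuousOnInterval hθ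
  have hu := (hθ.const_mul lam).fun_sub hs
  unfold bonnesenPotential
  simp only [sq]
  exact ((((hθ.fun_mul hsin).fun_add hcos).const_mul _).fun_sub
    ((hu.fun_mul hu).fun_mul hcos)).fun_sub
    (((hθ.fun_mul hx).fun_add (hs.fun_mul hsin)).const_mul _) |>.fun_add
    ((hs.const_mul 2).fun_mul hx)

theorem integral_bonnesen_eq {a b : ℝ} (hθ : AbsolutelyContinuousOnInterval θ a b)
    (hx : AbsolutelyContinuousOnInterval x a b)
    (hx' : ∀ᵐ s, s ∈ uIoc a b → HasDerivAt x (cos (θ s)) s) :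
    ∫ s in a..b, (lam * θ s - s) ^ 2 * (deriv θ s * sin (θ s)) =
      2 * lam * (∫ s in a..b, (sin (θ s) + deriv θ s * x s)) - 2 * (∫ s in a..b, x s)
        + (bonnesenPotential lam θ x b - bonnesenPotential lam θ x a) := by
  have hθ' := hθ.intervalIntegrable_deriv
  have hsin : ContinuousOn (fun s ↦ sin (θ s)) (uIcc a b) :=
    continuous_sin.comp_continuousOn hθ.continuousOn
  have hu : ContinuousOn (fun s ↦ (lam * θ s - s) ^ 2) (uIcc a b) := by
    have := hθ.continuousOn
    fun_prop
  have hg : IntervalIntegrable (fun s ↦ (lam * θ s - s) ^ 2 * (deriv θ s * sin (θ s)))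
      volume a b :=
    (hθ'.mul_continuousOn hsin).continuousOn_mul hu
  have hq : IntervalIntegrable (fun s ↦ sin (θ s) + deriv θ s * x s) volume a b :=
    hsin.intervalIntegrable.add (hθ'.mul_continuousOn hx.continuousOn)
  have hxi : IntervalIntegrable x volume a b := hx.continuousOn.intervalIntegrable
  have hFTC :=
    (absolutelyContinuousOnInterval_bonnesenPotential (lam := lam) hθ hx).integral_deriv_eq_sub
  have hderiv : ∫ s in a..b, deriv (bonnesenPotential lam θ x) s =
      ∫ s in a..b, ((lam * θ s - s) ^ 2 * (deriv θ s * sin (θ s))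
        - 2 * lam * (sin (θ s) + deriv θ s * x s) + 2 * x s) := by
    refine integral_congr_ae ?_
    filter_upwards [hθ.ae_differentiableAt, hx'] with s hθs hxs hs
    exact (hasDerivAt_bonnesenPotential (hθs (uIoc_subset_uIcc hs)).hasDerivAt (hxs hs)).deriv
  rw [hderiv, integral_add (hg.sub (hq.const_mul _)) (hxi.const_mul _),
    integral_sub hg (hq.const_mul _), intervalIntegral.integral_const_mul,
    intervalIntegral.integral_const_mul] at hFTC
  linarith

end Bonnesen

theorem stmt_13_general (L : ℝ) (hL : 0 < L) (θ : ℝ → ℝ) (K : NNReal)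
    (hθ : LipschitzOnWith K θ (Set.Icc 0 L))
    (h0 : θ 0 = 0) (hLval : θ L = Real.pi)
    (hxL : (∫ t in (0:ℝ)..L, Real.cos (θ t)) = 0)
    (hK : ∀ᵐ s ∂(MeasureTheory.volume.restrict (Set.Ioo 0 L)),
      0 ≤ deriv θ s * Real.sin (θ s)) :
    4 * Real.pi * (L / Real.pi) ^ 2
      - 2 * (L / Real.pi) * (Real.pi * ∫ s in (0:ℝ)..L,
          (Real.sin (θ s) + deriv θ s * ∫ t in (0:ℝ)..s, Real.cos (θ t)))
      + 2 * Real.pi * ∫ s in (0:ℝ)..L, (∫ t in (0:ℝ)..s, Real.cos (θ t)) ≤ 0 := by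
  set x : ℝ → ℝ := fun s ↦ ∫ t in (0:ℝ)..s, cos (θ t) with hx
  rw [← uIcc_of_le hL.le] at hθ
  have hθac := hθ.absolutelyContinuousOnInterval
  have hcos : IntervalIntegrable (fun t ↦ cos (θ t)) volume 0 L :=
    (continuous_cos.comp_continuousOn hθac.continuousOn).intervalIntegrable
  have hxac : AbsolutelyContinuousOnInterval x 0 L :=
    hcos.absolutelyContinuousOnInterval_intervalIntegral left_mem_uIcc
  have hx' : ∀ᵐ s, s ∈ uIoc 0 L → HasDerivAt x (cos (θ s)) s := by
    filter_upwards [hcos.ae_hasDerivAt_integral] with s hs hmem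
    exact hs (uIoc_subset_uIcc hmem) 0 left_mem_uIcc
  have hΦ0 : bonnesenPotential (L / π) θ x 0 = 2 * (L / π) ^ 2 := by
    simp [bonnesenPotential, h0, hx]
  have hΦL : bonnesenPotential (L / π) θ x L = -2 * (L / π) ^ 2 := by
    simp [bonnesenPotential, hLval, hx, hxL, div_mul_cancel₀ L pi_ne_zero]
  have key := integral_bonnesen_eq (lam := L / π) hθac hxac hx'
  rw [hΦ0, hΦL] at key
  have hnonneg : 0 ≤ ∫ s in 0..L, (L / π * θ s - s) ^ 2 * (deriv θ s * sin (θ s)) := by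
    rw [integral_of_le hL.le, integral_Ioc_eq_integral_Ioo]
    exact integral_nonneg_of_ae (hK.mono fun s hs ↦ mul_nonneg (sq_nonneg _) hs)
  calc _ = -(π * ∫ s in 0..L, (L / π * θ s - s) ^ 2 * (deriv θ s * sin (θ s))) := by
        rw [key]; ring
    _ ≤ 0 := neg_nonpos.mpr (mul_nonneg pi_pos.le hnonneg)

theorem stmt_13 (L : ℝ) (hL : 0 < L) (θ : ℝ → ℝ) (K : NNReal)
    (hθ : LipschitzOnWith K θ (Set.Icc 0 L))
    (h0 : θ 0 = 0) (hLval : θ L = Real.pi)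
    (hxL : (∫ t in (0:ℝ)..L, Real.cos (θ t)) = 0)
    (hxpos : ∀ s ∈ Set.Ioo (0:ℝ) L, 0 < ∫ t in (0:ℝ)..s, Real.cos (θ t))
    (hK : ∀ᵐ s ∂(MeasureTheory.volume.restrict (Set.Ioo 0 L)),
      0 ≤ deriv θ s * Real.sin (θ s)) :
    4 * Real.pi * (L / Real.pi) ^ 2
      - 2 * (L / Real.pi) * (Real.pi * ∫ s in (0:ℝ)..L,
          (Real.sin (θ s) + deriv θ s * ∫ t in (0:ℝ)..s, Real.cos (θ t)))
      + 2 * Real.pi * ∫ s in (0:ℝ)..L, (∫ t in (0:ℝ)..s, Real.cos (θ t)) ≤ 0 :=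
  stmt_13_general L hL θ K hθ h0 hLval hxL hK
end
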